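/- (Descent property of the singular-value penalized iteration, Gaussian case) Let Θ be a threshold function, λ ≥ 0, and suppose there is L_Θ ∈ [0,1] such that u ↦ sup{t : Θ(t;λ) ≤ u} − (1−L_Θ)u is nondecreasing on (0,∞). Let P be a penalty satisfying condition (constrP) for Θ. Let Y ∈ ℝ^{n×m}, X ∈ ℝ^{n×p}, and set ρ = ‖X‖₂² (squared spectral norm). Suppose ρ < 2 − L_Θ. Starting from any B⁽⁰⁾ ∈ ℝ^{p×m}, define iteratively B⁽ʲ⁺¹⁾ = Θ^σ(B⁽ʲ⁾ + XᵀY − XᵀXB⁽ʲ⁾; λ). Then F(B⁽ʲ⁾) is nonincreasing and for all j ≥ 1, F(B⁽ʲ⁾) − F(B⁽ʲ⁺¹⁾) ≥ (C/2)‖B⁽ʲ⁾ − B⁽ʲ⁺¹⁾‖_F², where F(B) = ‖Y−XB‖_F²/2 + Σ_s P(σ_s(B);λ) and C = 2 − L_Θ − ρ. -/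

import Mathlib

/-!
Write `ξ = B + Xᵀ(Y − XB) = U diag(y) Vᵀ`, so that the next iterate is `B⁺ = U diag(Θ(y)) Vᵀ`.
Expanding the least-squares term around `B` and bounding `‖X(B⁺ − B)‖_F² ≤ ρ ‖B⁺ − B‖_F²`
reduces the claim to the proximal inequality
`(2 − L)/2 ‖B − B⁺‖_F² ≤ ⟨ξ − B, B⁺ − B⟩ + ∑ P(σᵢ(B)) − ∑ P(Θ(yᵢ))`.
Its scalar version `(Θy − y)²/2 − (θ − y)²/2 + (1 − L)/2 (θ − Θy)² ≤ P θ − P (Θy)` comes from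
(constrP): with `h(u) = sup {s | Θ s ≤ u}`, the function `h(u) − (1 − L) u` lies above the level
`y − (1 − L) Θy` to the right of `Θy` and below it to the left. The matrix version follows from
von Neumann's trace inequality `⟨A, C⟩ ≤ ∑ σᵢ(A) σᵢ(C)`: by Bessel's inequality the entrywise
products of the two changes of frame form a doubly substochastic matrix, and Abel summation
bounds the resulting bilinear form by the sorted pairing.
-/

open Matrix

/-- Squared Frobenius norm of a real matrix. -/
def frobSq {n m : ℕ} (A : Matrix (Fin n) (Fin m) ℝ) : ℝ := ∑ i, ∑ j, A i j ^ 2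

/-- `(U, σ, V)` is a (reduced) singular value decomposition of the real `n × m` matrix `B`. -/
def IsSVD {n m k : ℕ} (B : Matrix (Fin n) (Fin m) ℝ) (U : Matrix (Fin n) (Fin k) ℝ)
    (σ : Fin k → ℝ) (V : Matrix (Fin m) (Fin k) ℝ) : Prop :=
  Uᵀ * U = 1 ∧ Vᵀ * V = 1 ∧ Antitone σ ∧ (∀ i, 0 ≤ σ i) ∧ B = U * diagonal σ * Vᵀ

/-- A threshold function `Θ(t; λ)`. -/
def IsThresholdFunction (Θ : ℝ → ℝ → ℝ) : Prop :=
  ∀ lam : ℝ, 0 ≤ lam →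
    (∀ t : ℝ, Θ (-t) lam = -Θ t lam) ∧
    (Monotone fun t => Θ t lam) ∧
    Filter.Tendsto (fun t => Θ t lam) Filter.atTop Filter.atTop ∧
    (∀ t : ℝ, 0 ≤ t → 0 ≤ Θ t lam ∧ Θ t lam ≤ t)

/-- The squared spectral norm `‖X‖₂²` (largest singular value squared) of a real matrix,
defined as the squared operator norm of the induced map `ℓ²(Fin p) → ℓ²(Fin n)`. -/
noncomputable def spectralNormSq {n p : ℕ} (X : Matrix (Fin n) (Fin p) ℝ) : ℝ :=
  ‖LinearMap.toContinuousLinearMap (Matrix.toEuclideanLin X)‖ ^ 2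

open Finset MeasureTheory Filter Topology

section Threshold

open Set

variable {f : ℝ → ℝ} {κ : ℝ}

noncomputable def thresholdInv (f : ℝ → ℝ) (u : ℝ) : ℝ := sSup {s | f s ≤ u}

lemma bddAbove_setOf_le_of_tendsto (hf : Tendsto f atTop atTop) (u : ℝ) :
    BddAbove {s | f s ≤ u} := by
  obtain ⟨M, hM⟩ := (hf.eventually_gt_atTop u).exists_forall_of_atTop
  exact ⟨M, fun s hs => not_lt.1 fun hMs => (hM s hMs.le).not_ge hs⟩

lemma le_thresholdInv (hf : Tendsto f atTop atTop) {y u : ℝ} (h : f y ≤ u) :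
    y ≤ thresholdInv f u :=
  le_csSup (bddAbove_setOf_le_of_tendsto hf u) h

lemma thresholdInv_le (hf : Monotone f) {y u : ℝ} (hy : 0 ≤ y) (h : u < f y) :
    thresholdInv f u ≤ y :=
  Real.sSup_le (fun _ hs => (hf.reflect_lt (lt_of_le_of_lt hs h)).le) hy

lemma monotoneOn_thresholdInv (hf : Tendsto f atTop atTop) (hf0 : f 0 = 0) :
    MonotoneOn (thresholdInv f) (Ici 0) := fun _ hu v _ huv =>
  csSup_le_csSup (bddAbove_setOf_le_of_tendsto hf v) ⟨0, hf0.trans_le hu⟩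
    fun _ hs => le_trans hs huv

lemma sub_le_thresholdInv_sub (hf : Tendsto f atTop atTop)
    (hφ : MonotoneOn (fun u => thresholdInv f u - κ * u) (Ioi 0)) {y u : ℝ} (hy : 0 ≤ f y)
    (hu : f y < u) : y - κ * f y ≤ thresholdInv f u - κ * u := by
  have hw : ∀ w ∈ Ioc (f y) u, y - κ * w ≤ thresholdInv f u - κ * u := fun w hw =>
    calc y - κ * w ≤ thresholdInv f w - κ * w := sub_le_sub_right (le_thresholdInv hf hw.1.le) _
      _ ≤ thresholdInv f u - κ * u :=
        hφ (hy.trans_lt hw.1) (hy.trans_lt (hw.1.trans_le hw.2)) hw.2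
  have hlim : Tendsto (fun w => y - κ * w) (𝓝[>] f y) (𝓝 (y - κ * f y)) :=
    (Continuous.tendsto (by fun_prop) _).mono_left nhdsWithin_le_nhds
  exact le_of_tendsto hlim (eventually_of_mem (Ioc_mem_nhdsGT hu) hw)

lemma thresholdInv_sub_le_sub (hf : Monotone f)
    (hφ : MonotoneOn (fun u => thresholdInv f u - κ * u) (Ioi 0)) {y u : ℝ} (hy : 0 ≤ y)
    (hu : 0 < u) (huy : u < f y) : thresholdInv f u - κ * u ≤ y - κ * f y := by
  have hw : ∀ w ∈ Ico u (f y), thresholdInv f u - κ * u ≤ y - κ * w := fun w hw =>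
    calc thresholdInv f u - κ * u ≤ thresholdInv f w - κ * w :=
        hφ hu (hu.trans_le hw.1) hw.1
      _ ≤ y - κ * w := sub_le_sub_right (thresholdInv_le hf hy hw.2) _
  have hlim : Tendsto (fun w => y - κ * w) (𝓝[<] f y) (𝓝 (y - κ * f y)) :=
    (Continuous.tendsto (by fun_prop) _).mono_left nhdsWithin_le_nhds
  exact ge_of_tendsto hlim (eventually_of_mem (Ico_mem_nhdsLT huy) hw)

lemma intervalIntegral_nonneg_of_sign {g : ℝ → ℝ} {a b : ℝ}
    (hab : ∀ u ∈ Ioo a b, 0 ≤ g u) (hba : ∀ u ∈ Ioo b a, g u ≤ 0) :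
    0 ≤ ∫ u in a..b, g u := by
  rcases le_total a b with h | h
  · rw [intervalIntegral.integral_of_le h, integral_Ioc_eq_integral_Ioo]
    exact setIntegral_nonneg measurableSet_Ioo hab
  · rw [intervalIntegral.integral_of_ge h, integral_Ioc_eq_integral_Ioo, neg_nonneg]
    exact setIntegral_nonpos measurableSet_Ioo hba

lemma integral_affine_eq (t θ y κ : ℝ) :
    ∫ u in t..θ, (y - κ * t + κ * u - u)
      = (t - y) ^ 2 / 2 - (θ - y) ^ 2 / 2 + κ / 2 * (θ - t) ^ 2 := by
  have hi (g : ℝ → ℝ) (hg : Continuous g) : IntervalIntegrable g volume t θ :=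
    hg.intervalIntegrable _ _
  rw [intervalIntegral.integral_sub (hi _ (by fun_prop)) (hi _ (by fun_prop)),
    intervalIntegral.integral_add (hi _ (by fun_prop)) (hi _ (by fun_prop)),
    intervalIntegral.integral_const, intervalIntegral.integral_const_mul, integral_id]
  simp only [smul_eq_mul]; ring

theorem penalty_prox_ineq (hf : Monotone f) (hftop : Tendsto f atTop atTop) (hf0 : f 0 = 0)
    (hφ : MonotoneOn (fun u => thresholdInv f u - κ * u) (Ioi 0))
    {P q : ℝ → ℝ} (hq : ∀ θ, 0 ≤ q θ) (hqf : ∀ t, q (f t) = 0)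
    (hP : ∀ θ, P θ - P 0 = (∫ u in (0 : ℝ)..|θ|, (thresholdInv f u - u)) + q θ)
    {y θ : ℝ} (hy : 0 ≤ y) (hθ : 0 ≤ θ) :
    (f y - y) ^ 2 / 2 - (θ - y) ^ 2 / 2 + κ / 2 * (θ - f y) ^ 2 ≤ P θ - P (f y) := by
  set t := f y
  have ht : 0 ≤ t := hf0 ▸ hf hy
  have hint {a b : ℝ} (ha : 0 ≤ a) (hb : 0 ≤ b) :
      IntervalIntegrable (fun u => thresholdInv f u - u) volume a b :=
    ((monotoneOn_thresholdInv hftop hf0).mono fun _ hx =>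
      (le_min ha hb).trans hx.1).intervalIntegrable.sub intervalIntegral.intervalIntegrable_id
  have hPt : P θ - P t = (∫ u in t..θ, (thresholdInv f u - u)) + q θ := by
    have hθ' := hP θ
    have ht' := hP t
    rw [abs_of_nonneg hθ] at hθ'
    rw [abs_of_nonneg ht, hqf] at ht'
    rw [← intervalIntegral.integral_interval_sub_left (hint le_rfl hθ) (hint le_rfl ht)]
    linarith
  have hgap : 0 ≤ ∫ u in t..θ, ((thresholdInv f u - u) - (y - κ * t + κ * u - u)) :=
    intervalIntegral_nonneg_of_sign
      (fun u hu => by linarith [sub_le_thresholdInv_sub hftop hφ ht hu.1])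
      (fun u hu => by linarith [thresholdInv_sub_le_sub hf hφ hy (hθ.trans_lt hu.1) hu.2])
  rw [intervalIntegral.integral_sub (hint ht hθ)
    (Continuous.intervalIntegrable (by fun_prop) _ _), integral_affine_eq] at hgap
  linarith [hq θ]

end Threshold

section Frobenius

variable {m n o : Type*} [Fintype m] [Fintype n]

def frobInner (A B : Matrix m n ℝ) : ℝ := trace (Aᵀ * B)

lemma frobSq_eq_frobInner {a b : ℕ} (A : Matrix (Fin a) (Fin b) ℝ) :
    frobSq A = frobInner A A := by
  simp only [frobSq, frobInner, trace, diag_apply, mul_apply, transpose_apply, sq]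
  exact sum_comm

lemma frobInner_comm (A B : Matrix m n ℝ) : frobInner A B = frobInner B A := by
  rw [frobInner, ← trace_transpose, transpose_mul, transpose_transpose, frobInner]

lemma frobInner_sub_right (A B C : Matrix m n ℝ) :
    frobInner A (B - C) = frobInner A B - frobInner A C := by
  simp [frobInner, Matrix.mul_sub]

lemma frobInner_sub_left (A B C : Matrix m n ℝ) :
    frobInner (A - B) C = frobInner A C - frobInner B C := by
  simp [frobInner, Matrix.sub_mul]

lemma frobInner_smul_right (A B : Matrix m n ℝ) (c : ℝ) :
    frobInner A (c • B) = c * frobInner A B := by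
  simp [frobInner]

lemma frobInner_mul_right [Fintype o] (X : Matrix m o ℝ) (M : Matrix m n ℝ)
    (N : Matrix o n ℝ) : frobInner M (X * N) = frobInner (Xᵀ * M) N := by
  rw [frobInner, frobInner, transpose_mul, transpose_transpose, Matrix.mul_assoc]

lemma frobSq_sub {a b : ℕ} (A B : Matrix (Fin a) (Fin b) ℝ) :
    frobSq (A - B) = frobSq A - 2 * frobInner A B + frobSq B := by
  simp only [frobSq_eq_frobInner, frobInner_sub_left, frobInner_sub_right, frobInner_comm B A]
  ring

lemma frobSq_sub_comm {a b : ℕ} (A B : Matrix (Fin a) (Fin b) ℝ) :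
    frobSq (A - B) = frobSq (B - A) := by
  rw [frobSq_sub, frobSq_sub, frobInner_comm]; ring

lemma sum_sq_mulVec_le {a b : ℕ} (X : Matrix (Fin a) (Fin b) ℝ) (v : Fin b → ℝ) :
    ∑ i, (X *ᵥ v) i ^ 2 ≤ spectralNormSq X * ∑ i, v i ^ 2 := by
  have h := (LinearMap.toContinuousLinearMap (toEuclideanLin X)).le_opNorm (WithLp.toLp 2 v)
  have h2 := pow_le_pow_left₀ (norm_nonneg _) h 2
  simpa [spectralNormSq, mul_pow, EuclideanSpace.norm_sq_eq] using h2

lemma frobSq_mul_le {a b c : ℕ} (X : Matrix (Fin a) (Fin b) ℝ) (A : Matrix (Fin b) (Fin c) ℝ) :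
    frobSq (X * A) ≤ spectralNormSq X * frobSq A := by
  simp only [frobSq]
  rw [sum_comm, sum_comm (f := fun i j => A i j ^ 2), mul_sum]
  exact sum_le_sum fun j _ => sum_sq_mulVec_le X (fun t => A t j)

end Frobenius

lemma transpose_mul_submatrix {m o : Type*} [Fintype m] [DecidableEq o] {U : Matrix m o ℝ}
    (hU : Uᵀ * U = 1) (τ : Equiv.Perm o) : (U.submatrix id τ)ᵀ * U.submatrix id τ = 1 := by
  rw [transpose_submatrix, ← submatrix_mul _ _ _ _ _ Function.bijective_id, hU,
    submatrix_one_equiv]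

section SVD

variable {m n o : Type*} [Fintype o] [DecidableEq o]

lemma frobInner_svd [Fintype m] [Fintype n] (U U' : Matrix m o ℝ) (V V' : Matrix n o ℝ)
    (d e : o → ℝ) :
    frobInner (U * diagonal d * Vᵀ) (U' * diagonal e * V'ᵀ)
      = ∑ i, ∑ j, d i * e j * ((Uᵀ * U') i j * (Vᵀ * V') i j) := by
  have h : (U * diagonal d * Vᵀ)ᵀ * (U' * diagonal e * V'ᵀ)
      = V * (diagonal d * (Uᵀ * U') * diagonal e * V'ᵀ) := by
    simp only [transpose_mul, transpose_transpose, diagonal_transpose, Matrix.mul_assoc]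
  have hS : ∀ i j, (V'ᵀ * V) j i = (Vᵀ * V') i j := fun i j => by
    rw [← transpose_apply (Vᵀ * V'), transpose_mul, transpose_transpose]
  rw [frobInner, h, trace_mul_comm, Matrix.mul_assoc _ V'ᵀ]
  simp only [trace, diag_apply, mul_apply (N := V'ᵀ * V), mul_diagonal, diagonal_mul, hS]
  exact sum_congr rfl fun i _ => sum_congr rfl fun j _ => by ring

lemma frobInner_svd_same [Fintype m] [Fintype n] (U : Matrix m o ℝ) (V : Matrix n o ℝ)
    (hU : Uᵀ * U = 1) (hV : Vᵀ * V = 1) (d e : o → ℝ) :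
    frobInner (U * diagonal d * Vᵀ) (U * diagonal e * Vᵀ) = ∑ i, d i * e i := by
  rw [frobInner_svd, hU, hV]
  refine sum_congr rfl fun i _ => ?_
  rw [sum_eq_single i (fun j _ hj => by simp [one_apply_ne' hj]) (by simp)]
  simp

lemma frobSq_svd {a b k : ℕ} (U : Matrix (Fin a) (Fin k) ℝ) (V : Matrix (Fin b) (Fin k) ℝ)
    (hU : Uᵀ * U = 1) (hV : Vᵀ * V = 1) (d : Fin k → ℝ) :
    frobSq (U * diagonal d * Vᵀ) = ∑ i, d i ^ 2 := by
  simp only [frobSq_eq_frobInner, frobInner_svd_same U V hU hV, sq]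

lemma sub_smul_svd (U : Matrix m o ℝ) (V : Matrix n o ℝ) (d e : o → ℝ) (c : ℝ) :
    U * diagonal d * Vᵀ - c • (U * diagonal e * Vᵀ) = U * diagonal (d - c • e) * Vᵀ := by
  rw [show diagonal (d - c • e) = diagonal d - c • diagonal e by
    rw [← diagonal_smul]; exact (diagonal_sub _ _).symm]
  rw [Matrix.mul_sub, Matrix.sub_mul, Matrix.mul_smul, Matrix.smul_mul]

lemma svd_reindex (U : Matrix m o ℝ) (V : Matrix n o ℝ) (e : o → ℝ) (τ : Equiv.Perm o) :
    U.submatrix id τ * diagonal (e ∘ τ) * (V.submatrix id τ)ᵀ = U * diagonal e * Vᵀ := by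
  rw [← submatrix_diagonal_equiv, transpose_submatrix, submatrix_mul_equiv,
    submatrix_mul_equiv, submatrix_id_id]

lemma sum_sq_transpose_mul_apply_le [Fintype m] {U U' : Matrix m o ℝ} (hU : Uᵀ * U = 1)
    (hU' : U'ᵀ * U' = 1) (j : o) : ∑ i, (Uᵀ * U') i j ^ 2 ≤ 1 := by
  set Q := Uᵀ * U'
  -- Bessel: `U' - U * Q` is the residual of projecting the columns of `U'` onto those of `U`
  have hQ : U'ᵀ * U = Qᵀ := by simp [Q, transpose_mul]
  have hW : (U' - U * Q)ᵀ * (U' - U * Q) = 1 - Qᵀ * Q :=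
    calc (U' - U * Q)ᵀ * (U' - U * Q)
        = U'ᵀ * U' - U'ᵀ * U * Q - Qᵀ * (Uᵀ * U') + Qᵀ * (Uᵀ * U) * Q := by
          simp only [transpose_sub, transpose_mul, Matrix.sub_mul, Matrix.mul_sub,
            Matrix.mul_assoc]
          abel
      _ = 1 - Qᵀ * Q := by
          rw [hU', hQ, hU, Matrix.mul_one]
          abel
  have h := congrFun (congrFun hW j) j
  rw [Matrix.sub_apply, one_apply_eq] at h
  simp only [mul_apply, transpose_apply] at h
  have hnn : 0 ≤ ∑ x, (U' - U * Q) x j * (U' - U * Q) x j :=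
    sum_nonneg fun x _ => mul_self_nonneg _
  simp only [sq]
  linarith

end SVD

section Rearrangement

variable {ι : Type*} [LinearOrder ι] [Fintype ι]

lemma sum_mul_nonneg_of_prefix_sum_nonneg {d z : ι → ℝ} (hd : Antitone d)
    (hd0 : ∀ i, 0 ≤ d i) (hz : ∀ r, 0 ≤ ∑ i with i ≤ r, z i) : 0 ≤ ∑ i, d i * z i := by
  suffices h : ∀ s : Finset ι, ∀ d : ι → ℝ, Antitone d → (∀ i ∈ s, 0 ≤ d i) →
      (∀ r ∈ s, 0 ≤ ∑ i ∈ s with i ≤ r, z i) → 0 ≤ ∑ i ∈ s, d i * z i from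
    h univ d hd (fun i _ => hd0 i) fun r _ => hz r
  intro s
  induction s using Finset.induction_on_max with
  | empty => simp
  | insert a s has ih =>
    intro d hd hd0 hz
    have ha : a ∉ s := fun h => lt_irrefl a (has a h)
    have hfilter : ∀ r ∈ s, (insert a s).filter (· ≤ r) = s.filter (· ≤ r) := fun r hr => by
      rw [filter_insert, if_neg (not_le.2 (has r hr))]
    -- Abel summation step: split off the smallest weight `d a`
    have hsplit : ∑ i ∈ insert a s, d i * z i
        = ∑ i ∈ s, (d i - d a) * z i + d a * ∑ i ∈ insert a s with i ≤ a, z i := by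
      rw [filter_true_of_mem fun i hi => (mem_insert.1 hi).elim le_of_eq fun h => (has i h).le,
        sum_insert ha, sum_insert ha, mul_add, mul_sum]
      simp only [sub_mul, sum_sub_distrib]
      ring
    rw [hsplit]
    refine add_nonneg
      (ih (fun i => d i - d a) (fun i j hij => sub_le_sub_right (hd hij) _) (fun i hi => ?_)
        fun r hr => ?_)
      (mul_nonneg (hd0 a (mem_insert_self a s)) (hz a (mem_insert_self a s)))
    · exact sub_nonneg.2 (hd (has i hi).le)
    · rw [← hfilter r hr]; exact hz r (mem_insert_of_mem hr)

lemma sum_mul_le_sum_prefix {e w : ι → ℝ} (he : Antitone e) (he0 : ∀ i, 0 ≤ e i)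
    (hw0 : ∀ j, 0 ≤ w j) (hw1 : ∀ j, w j ≤ 1) {r : ι} (hw : ∑ j, w j ≤ #{j | j ≤ r}) :
    ∑ j, e j * w j ≤ ∑ j with j ≤ r, e j := by
  -- compare every term with the pivot value `e r`
  have hterm : ∀ j, e j * w j - (if j ≤ r then e j else 0)
      ≤ e r * (w j - if j ≤ r then 1 else 0) := fun j => by
    split_ifs with hj
    · nlinarith [he hj, hw1 j]
    · nlinarith [he (not_le.1 hj).le, hw0 j]
  have hcard : (#{j | j ≤ r} : ℝ) = ∑ j, if j ≤ r then (1 : ℝ) else 0 := by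
    rw [sum_boole]
  have := sum_le_sum fun j (_ : j ∈ univ) => hterm j
  rw [sum_sub_distrib, ← sum_filter, ← mul_sum, sum_sub_distrib, ← hcard] at this
  nlinarith [he0 r]

theorem sum_sum_mul_le_of_substochastic {d e : ι → ℝ} {D : ι → ι → ℝ} (hd : Antitone d)
    (hd0 : ∀ i, 0 ≤ d i) (he : Antitone e) (he0 : ∀ i, 0 ≤ e i) (hD0 : ∀ i j, 0 ≤ D i j)
    (hrow : ∀ i, ∑ j, D i j ≤ 1) (hcol : ∀ j, ∑ i, D i j ≤ 1) :
    ∑ i, ∑ j, d i * e j * D i j ≤ ∑ i, d i * e i := by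
  have key := sum_mul_nonneg_of_prefix_sum_nonneg (z := fun i => e i - ∑ j, e j * D i j) hd hd0
    fun r => by
      have hpre := sum_mul_le_sum_prefix he he0 (w := fun j => ∑ i with i ≤ r, D i j)
        (fun j => sum_nonneg fun i _ => hD0 i j)
        (fun j => (sum_le_sum_of_subset_of_nonneg (filter_subset _ _)
          fun i _ _ => hD0 i j).trans (hcol j))
        (r := r) (by
          rw [sum_comm]
          simpa using sum_le_sum fun i (_ : i ∈ ({i | i ≤ r} : Finset ι)) => hrow i)
      simp only [mul_sum] at hpre
      rw [sum_sub_distrib, sum_comm]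
      linarith
  simp only [mul_sub, sum_sub_distrib, mul_sum] at key
  simp only [mul_assoc]
  linarith

end Rearrangement

section VonNeumann

variable {m n : Type*} [Fintype m] [Fintype n]

theorem frobInner_svd_le {o : Type*} [Fintype o] [LinearOrder o] {U U' : Matrix m o ℝ}
    {V V' : Matrix n o ℝ} (hU : Uᵀ * U = 1) (hU' : U'ᵀ * U' = 1) (hV : Vᵀ * V = 1)
    (hV' : V'ᵀ * V' = 1) {d e : o → ℝ} (hd : Antitone d) (hd0 : ∀ i, 0 ≤ d i)
    (he : Antitone e) (he0 : ∀ i, 0 ≤ e i) :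
    frobInner (U * diagonal d * Vᵀ) (U' * diagonal e * V'ᵀ) ≤ ∑ i, d i * e i := by
  set Q := Uᵀ * U'
  set R := Vᵀ * V'
  have hQt : Qᵀ = U'ᵀ * U := by simp [Q, transpose_mul]
  have hRt : Rᵀ = V'ᵀ * V := by simp [R, transpose_mul]
  have hamgm : ∀ i j, d i * e j * (Q i j * R i j) ≤ d i * e j * ((Q i j ^ 2 + R i j ^ 2) / 2) :=
    fun i j => mul_le_mul_of_nonneg_left (by nlinarith [sq_nonneg (Q i j - R i j)])
      (mul_nonneg (hd0 i) (he0 j))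
  rw [frobInner_svd]
  refine (sum_le_sum fun i _ => sum_le_sum fun j _ => hamgm i j).trans
    (sum_sum_mul_le_of_substochastic hd hd0 he he0 (fun i j => by positivity) (fun i => ?_)
      fun j => ?_)
  · have hQ := sum_sq_transpose_mul_apply_le hU' hU i
    have hR := sum_sq_transpose_mul_apply_le hV' hV i
    rw [← hQt] at hQ
    rw [← hRt] at hR
    simp only [transpose_apply] at hQ hR
    rw [← sum_div, sum_add_distrib]
    linarith
  · rw [← sum_div, sum_add_distrib]
    linarith [sum_sq_transpose_mul_apply_le hU hU' j, sum_sq_transpose_mul_apply_le hV hV' j]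

theorem exists_perm_frobInner_svd_le {k : ℕ} {U U' : Matrix m (Fin k) ℝ}
    {V V' : Matrix n (Fin k) ℝ} (hU : Uᵀ * U = 1) (hU' : U'ᵀ * U' = 1) (hV : Vᵀ * V = 1)
    (hV' : V'ᵀ * V' = 1) {d e : Fin k → ℝ} (hd : Antitone d) (hd0 : ∀ i, 0 ≤ d i)
    (he0 : ∀ i, 0 ≤ e i) :
    ∃ τ : Equiv.Perm (Fin k),
      frobInner (U * diagonal d * Vᵀ) (U' * diagonal e * V'ᵀ) ≤ ∑ i, d i * e (τ i) := by
  set τ := Tuple.sort (OrderDual.toDual ∘ e)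
  have hsorted : Antitone (e ∘ τ) := Tuple.monotone_sort (OrderDual.toDual ∘ e)
  refine ⟨τ, ?_⟩
  rw [← svd_reindex U' V' e τ]
  exact frobInner_svd_le hU (transpose_mul_submatrix hU' τ) hV (transpose_mul_submatrix hV' τ)
    hd hd0 hsorted fun i => he0 (τ i)

end VonNeumann

theorem penalty_prox_ineq_svd {a b k : ℕ} {f : ℝ → ℝ} {κ : ℝ} {P : ℝ → ℝ}
    (hf : ∀ y, 0 ≤ y → 0 ≤ f y ∧ f y ≤ y) (hκ : κ ≤ 1)
    (hprox : ∀ y θ, 0 ≤ y → 0 ≤ θ →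
      (f y - y) ^ 2 / 2 - (θ - y) ^ 2 / 2 + κ / 2 * (θ - f y) ^ 2 ≤ P θ - P (f y))
    {U₀ U : Matrix (Fin a) (Fin k) ℝ} {V₀ V : Matrix (Fin b) (Fin k) ℝ}
    (hU₀ : U₀ᵀ * U₀ = 1) (hV₀ : V₀ᵀ * V₀ = 1) (hU : Uᵀ * U = 1) (hV : Vᵀ * V = 1)
    {d y : Fin k → ℝ} (hd : Antitone d) (hd0 : ∀ i, 0 ≤ d i) (hy0 : ∀ i, 0 ≤ y i) :
    (1 + κ) / 2 * frobSq (U₀ * diagonal d * V₀ᵀ - U * diagonal (fun i => f (y i)) * Vᵀ)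
      ≤ frobInner (U * diagonal y * Vᵀ - U₀ * diagonal d * V₀ᵀ)
          (U * diagonal (fun i => f (y i)) * Vᵀ - U₀ * diagonal d * V₀ᵀ)
        + ∑ i, P (d i) - ∑ i, P (f (y i)) := by
  set t : Fin k → ℝ := fun i => f (y i)
  set A := U₀ * diagonal d * V₀ᵀ
  set B := U * diagonal t * Vᵀ
  set Ξ := U * diagonal y * Vᵀ
  have he0 : ∀ i, 0 ≤ (y - κ • t) i := fun i => by
    obtain ⟨ht0, hty⟩ := hf (y i) (hy0 i)
    simp only [Pi.sub_apply, Pi.smul_apply, smul_eq_mul, t]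
    nlinarith [mul_nonneg (sub_nonneg.2 hκ) ht0]
  obtain ⟨τ, hτ⟩ := exists_perm_frobInner_svd_le hU₀ hU hV₀ hV hd hd0 he0
  rw [← sub_smul_svd, frobInner_sub_right, frobInner_smul_right] at hτ
  have hscalar : ∑ i, ((t (τ i) - y (τ i)) ^ 2 / 2 - (d i - y (τ i)) ^ 2 / 2
      + κ / 2 * (d i - t (τ i)) ^ 2) ≤ ∑ i, P (d i) - ∑ i, P (t i) := by
    rw [← Equiv.sum_comp τ (fun i => P (t i)), ← sum_sub_distrib]
    exact sum_le_sum fun i _ => hprox _ _ (hy0 _) (hd0 i)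
  have hexpand : ∑ i, ((t (τ i) - y (τ i)) ^ 2 / 2 - (d i - y (τ i)) ^ 2 / 2
      + κ / 2 * (d i - t (τ i)) ^ 2) = (1 + κ) / 2 * ∑ i, t i ^ 2 + (κ - 1) / 2 * ∑ i, d i ^ 2
        - ∑ i, y i * t i + ∑ i, d i * (y - κ • t) (τ i) := by
    rw [← Equiv.sum_comp τ (fun i => t i ^ 2), ← Equiv.sum_comp τ (fun i => y i * t i)]
    simp only [mul_sum, ← sum_add_distrib, ← sum_sub_distrib]
    refine sum_congr rfl fun i _ => ?_
    simp only [Pi.sub_apply, Pi.smul_apply, smul_eq_mul]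
    ring
  have hAB : frobSq (A - B) = ∑ i, d i ^ 2 - 2 * frobInner A B + ∑ i, t i ^ 2 := by
    rw [frobSq_sub, frobSq_svd U₀ V₀ hU₀ hV₀, frobSq_svd U V hU hV]
  have hΞB : frobInner Ξ B = ∑ i, y i * t i := frobInner_svd_same U V hU hV y t
  have hAA : frobInner A A = ∑ i, d i ^ 2 := by
    rw [← frobSq_eq_frobInner, frobSq_svd U₀ V₀ hU₀ hV₀]
  rw [hAB, frobInner_sub_left, frobInner_sub_right, frobInner_sub_right, hΞB, hAA,
    frobInner_comm Ξ A]
  linarith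

lemma frobSq_sub_mul_eq {n m p : ℕ} (Y : Matrix (Fin n) (Fin m) ℝ)
    (X : Matrix (Fin n) (Fin p) ℝ) (A B : Matrix (Fin p) (Fin m) ℝ) :
    frobSq (Y - X * B) = frobSq (Y - X * A) - 2 * frobInner (Xᵀ * (Y - X * A)) (B - A)
      + frobSq (X * (B - A)) := by
  rw [show Y - X * B = (Y - X * A) - X * (B - A) by rw [Matrix.mul_sub]; abel, frobSq_sub,
    frobInner_mul_right]

theorem descent_gaussian_iteration_general {n p m : ℕ}
    (Θ : ℝ → ℝ → ℝ) (hΘ : IsThresholdFunction Θ) (lam : ℝ) (hlam : 0 ≤ lam)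
    (L : ℝ) (hL0 : 0 ≤ L)
    (hLmono : ∀ u v : ℝ, 0 < u → u ≤ v →
      sSup {s : ℝ | Θ s lam ≤ u} - (1 - L) * u ≤ sSup {s : ℝ | Θ s lam ≤ v} - (1 - L) * v)
    (P q : ℝ → ℝ)
    (hq : ∀ θ : ℝ, 0 ≤ q θ) (hqΘ : ∀ t : ℝ, q (Θ t lam) = 0)
    (hP : ∀ θ : ℝ,
      P θ - P 0 = (∫ u in (0:ℝ)..|θ|, (sSup {s : ℝ | Θ s lam ≤ u} - u)) + q θ)
    (Y : Matrix (Fin n) (Fin m) ℝ) (X : Matrix (Fin n) (Fin p) ℝ)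
    (ρ : ℝ) (hρdef : ρ = spectralNormSq X)
    (B : ℕ → Matrix (Fin p) (Fin m) ℝ)
    (U : ℕ → Matrix (Fin p) (Fin (min p m)) ℝ)
    (σ : ℕ → Fin (min p m) → ℝ)
    (V : ℕ → Matrix (Fin m) (Fin (min p m)) ℝ)
    (hSVD : ∀ j : ℕ, IsSVD (B j + Xᵀ * Y - Xᵀ * X * B j) (U j) (σ j) (V j))
    (hiter : ∀ j : ℕ, B (j + 1) = U j * diagonal (fun i => Θ (σ j i) lam) * (V j)ᵀ) :
    ∀ j : ℕ,
      (frobSq (Y - X * B (j + 1)) / 2 + ∑ i, P (Θ (σ j i) lam))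
          - (frobSq (Y - X * B (j + 2)) / 2 + ∑ i, P (Θ (σ (j + 1) i) lam))
        ≥ (2 - L - ρ) / 2 * frobSq (B (j + 1) - B (j + 2)) := by
  intro j
  obtain ⟨-, hmono, htop, hrange⟩ := hΘ lam hlam
  have hΘ0 : Θ 0 lam = 0 := le_antisymm (hrange 0 le_rfl).2 (hrange 0 le_rfl).1
  obtain ⟨hU₀, hV₀, hσ₀, hσ₀0, -⟩ := hSVD j
  obtain ⟨hU, hV, -, hσ0, hξ⟩ := hSVD (j + 1)
  have hprox y θ := penalty_prox_ineq (f := fun t => Θ t lam) (κ := 1 - L) hmono htop hΘ0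
    (fun u hu v _ huv => hLmono u v hu huv) hq hqΘ hP (y := y) (θ := θ)
  have hdescent := penalty_prox_ineq_svd hrange (by linarith) hprox hU₀ hV₀ hU hV
    (fun _ _ h => hmono (hσ₀ h)) (fun i => (hrange _ (hσ₀0 i)).1) hσ0
  have hgrad : B (j + 1) + Xᵀ * Y - Xᵀ * X * B (j + 1) - B (j + 1)
      = Xᵀ * (Y - X * B (j + 1)) := by
    rw [Matrix.mul_sub, Matrix.mul_assoc]; abel
  rw [← hiter, ← hiter, ← hξ, hgrad] at hdescent
  have hspec := frobSq_mul_le X (B (j + 1 + 1) - B (j + 1))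
  rw [frobSq_sub_comm] at hspec
  have hls := frobSq_sub_mul_eq Y X (B (j + 1)) (B (j + 1 + 1))
  subst hρdef
  linarith

/-- Descent property of the singular-value penalized iteration (Gaussian case):
with `ρ = ‖X‖₂² < 2 − L_Θ` and iterates `B⁽ʲ⁺¹⁾ = Θ^σ(B⁽ʲ⁾ + XᵀY − XᵀXB⁽ʲ⁾; λ)`
(given here via an SVD `(U j, σ j, V j)` of the argument at each step), the objective
`F(B) = ‖Y−XB‖_F²/2 + ∑_s P(σ_s(B);λ)` is nonincreasing along the iterates and, for all
`j ≥ 1`, `F(B⁽ʲ⁾) − F(B⁽ʲ⁺¹⁾) ≥ (C/2)‖B⁽ʲ⁾ − B⁽ʲ⁺¹⁾‖_F²` with `C = 2 − L_Θ − ρ`.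
(The singular values of `B⁽ʲ⁺¹⁾` are `Θ(σ_j(i); λ)`.) -/
theorem descent_gaussian_iteration {n p m : ℕ}
    (Θ : ℝ → ℝ → ℝ) (hΘ : IsThresholdFunction Θ) (lam : ℝ) (hlam : 0 ≤ lam)
    (L : ℝ) (hL0 : 0 ≤ L) (hL1 : L ≤ 1)
    (hLmono : ∀ u v : ℝ, 0 < u → u ≤ v →
      sSup {s : ℝ | Θ s lam ≤ u} - (1 - L) * u ≤ sSup {s : ℝ | Θ s lam ≤ v} - (1 - L) * v)
    (P q : ℝ → ℝ)
    (hq : ∀ θ : ℝ, 0 ≤ q θ) (hqΘ : ∀ t : ℝ, q (Θ t lam) = 0)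
    (hP : ∀ θ : ℝ,
      P θ - P 0 = (∫ u in (0:ℝ)..|θ|, (sSup {s : ℝ | Θ s lam ≤ u} - u)) + q θ)
    (Y : Matrix (Fin n) (Fin m) ℝ) (X : Matrix (Fin n) (Fin p) ℝ)
    (ρ : ℝ) (hρdef : ρ = spectralNormSq X) (hρ : ρ < 2 - L)
    (B : ℕ → Matrix (Fin p) (Fin m) ℝ)
    (U : ℕ → Matrix (Fin p) (Fin (min p m)) ℝ)
    (σ : ℕ → Fin (min p m) → ℝ)
    (V : ℕ → Matrix (Fin m) (Fin (min p m)) ℝ)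
    (hSVD : ∀ j : ℕ, IsSVD (B j + Xᵀ * Y - Xᵀ * X * B j) (U j) (σ j) (V j))
    (hiter : ∀ j : ℕ, B (j + 1) = U j * diagonal (fun i => Θ (σ j i) lam) * (V j)ᵀ) :
    ∀ j : ℕ,
      (frobSq (Y - X * B (j + 1)) / 2 + ∑ i, P (Θ (σ j i) lam))
          - (frobSq (Y - X * B (j + 2)) / 2 + ∑ i, P (Θ (σ (j + 1) i) lam))
        ≥ (2 - L - ρ) / 2 * frobSq (B (j + 1) - B (j + 2)) :=
  descent_gaussian_iteration_general Θ hΘ lam hlam L hL0 hLmono P q hq hqΘ hP Y X ρ hρdef B U σ V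
    hSVD hiter
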